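/- Let Υ: A → A₁A₂ be the channel on a d-dimensional system A whose Choi matrix is J = Σ_{i=0}^{d−1} |v_i⟩⟨v_i| with |v_i⟩ = (1/√(2(d+1)))(2|i⟩⊗|ii⟩ + Σ_{j≠i}|j⟩⊗(|ij⟩+|ji⟩)) (the universal quantum cloning machine). Then for every state ρ on A, tr_{A₂} Υ(ρ) = ((d+2)/(2d+2)) ρ + (1/(2d+2)) 1_d, i.e., each marginal of the UQCM is a depolarizing channel. -/

import Mathlib

open scoped Matrix Kronecker ComplexOrder
open Matrix

noncomputable section

namespace QIT

variable {A B A' B' O : Type*}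

/-- A density operator: positive semidefinite with unit trace. -/
def IsDensity [Fintype A] (ρ : Matrix A A ℂ) : Prop :=
  ρ.PosSemidef ∧ ρ.trace = 1

open Classical in
/-- Square root of a positive semidefinite matrix (junk value otherwise). -/
def msqrt [Fintype A] [DecidableEq A] (M : Matrix A A ℂ) : Matrix A A ℂ :=
  if h : M.PosSemidef then (h.1.eigenvectorUnitary : Matrix A A ℂ) *
    diagonal ((↑) ∘ (√·) ∘ h.1.eigenvalues) * (star (h.1.eigenvectorUnitary : Matrix A A ℂ))
    else 0

/-- Trace norm ‖M‖₁ = tr √(MᴴM). -/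
def traceNorm [Fintype A] [DecidableEq A] (M : Matrix A A ℂ) : ℝ :=
  (msqrt (Mᴴ * M)).trace.re

/-- Fidelity F(ρ,σ) = tr √(√ρ σ √ρ). -/
def fidelity [Fintype A] [DecidableEq A] (ρ σ : Matrix A A ℂ) : ℝ :=
  (msqrt (msqrt ρ * σ * msqrt ρ)).trace.re

/-- Von Neumann entropy in bits, via eigenvalues. -/
def entropy [Fintype A] [DecidableEq A] (ρ : Matrix A A ℂ) : ℝ :=
  if h : ρ.IsHermitian then -∑ i, (h.eigenvalues i) * Real.logb 2 (h.eigenvalues i) else 0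

/-- Partial trace over the second tensor factor. -/
def ptraceB [Fintype B] (M : Matrix (A × B) (A × B) ℂ) : Matrix A A ℂ :=
  of fun i j => ∑ b, M (i, b) (j, b)

/-- Partial trace over the first tensor factor. -/
def ptraceA [Fintype A] (M : Matrix (A × B) (A × B) ℂ) : Matrix B B ℂ :=
  of fun i j => ∑ a, M (a, i) (a, j)

/-- Quantum mutual information I(A:B) = H(A) + H(B) - H(AB). -/
def mutualInfo [Fintype A] [DecidableEq A] [Fintype B] [DecidableEq B]
    (ρ : Matrix (A × B) (A × B) ℂ) : ℝ :=
  entropy (ptraceB ρ) + entropy (ptraceA ρ) - entropy ρ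

/-- Binary entropy function (base 2). -/
def binEntropy (x : ℝ) : ℝ := -(x * Real.logb 2 x) - (1 - x) * Real.logb 2 (1 - x)

/-- Extension Φ ⊗ id_B of a linear map on matrices. -/
def lext [Fintype A] [Fintype A'] [Fintype B]
    (Φ : Matrix A A ℂ →ₗ[ℂ] Matrix A' A' ℂ) :
    Matrix (A × B) (A × B) ℂ →ₗ[ℂ] Matrix (A' × B) (A' × B) ℂ where
  toFun M := of fun p q => Φ (of fun i j => M (i, p.2) (j, q.2)) p.1 q.1
  map_add' M N := by
    ext p q
    have h : (of fun i j => (M + N) (i, p.2) (j, q.2)) =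
        (of fun i j => M (i, p.2) (j, q.2)) + (of fun i j => N (i, p.2) (j, q.2)) := rfl
    simp only [of_apply, Matrix.add_apply]
    rw [show (of fun i j => M (i, p.2) (j, q.2) + N (i, p.2) (j, q.2)) =
        (of fun i j => M (i, p.2) (j, q.2)) + (of fun i j => N (i, p.2) (j, q.2)) from rfl,
      map_add]
    simp [Matrix.add_apply]
  map_smul' c M := by
    ext p q
    simp only [of_apply, Matrix.smul_apply, RingHom.id_apply]
    rw [show (of fun i j => c • M (i, p.2) (j, q.2)) =
        c • (of fun i j => M (i, p.2) (j, q.2)) from rfl, LinearMap.map_smul]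
    simp [Matrix.smul_apply]

/-- Extension id_A ⊗ Ψ of a linear map on matrices. -/
def rext [Fintype B] [Fintype B'] [Fintype A]
    (Ψ : Matrix B B ℂ →ₗ[ℂ] Matrix B' B' ℂ) :
    Matrix (A × B) (A × B) ℂ →ₗ[ℂ] Matrix (A × B') (A × B') ℂ where
  toFun M := of fun p q => Ψ (of fun i j => M (p.1, i) (q.1, j)) p.2 q.2
  map_add' M N := by
    ext p q
    simp only [of_apply, Matrix.add_apply]
    rw [show (of fun i j => M (p.1, i) (q.1, j) + N (p.1, i) (q.1, j)) =
        (of fun i j => M (p.1, i) (q.1, j)) + (of fun i j => N (p.1, i) (q.1, j)) from rfl,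
      map_add]
    simp [Matrix.add_apply]
  map_smul' c M := by
    ext p q
    simp only [of_apply, Matrix.smul_apply, RingHom.id_apply]
    rw [show (of fun i j => c • M (p.1, i) (q.1, j)) =
        c • (of fun i j => M (p.1, i) (q.1, j)) from rfl, LinearMap.map_smul]
    simp [Matrix.smul_apply]

/-- Tensor product E ⊗ F of two maps on matrices. -/
def tensorMap [Fintype A] [Fintype A'] [Fintype B] [Fintype B']
    (E : Matrix A A ℂ →ₗ[ℂ] Matrix A' A' ℂ) (F : Matrix B B ℂ →ₗ[ℂ] Matrix B' B' ℂ) :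
    Matrix (A × B) (A × B) ℂ →ₗ[ℂ] Matrix (A' × B') (A' × B') ℂ :=
  (rext F).comp (lext E)

/-- Completely positive trace preserving map. -/
def IsCPTP [Fintype A] [Fintype A'] (Φ : Matrix A A ℂ →ₗ[ℂ] Matrix A' A' ℂ) : Prop :=
  (∀ (k : ℕ) (M : Matrix (A × Fin k) (A × Fin k) ℂ), M.PosSemidef →
      (lext (B := Fin k) Φ M).PosSemidef) ∧
  ∀ M : Matrix A A ℂ, (Φ M).trace = M.trace

/-- Diamond norm via finite-dimensional ancillas. -/
def diamondNorm [Fintype A] [DecidableEq A] [Fintype A'] [DecidableEq A']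
    (Φ : Matrix A A ℂ →ₗ[ℂ] Matrix A' A' ℂ) : ℝ :=
  sSup {r | ∃ (k : ℕ) (X : Matrix (A × Fin k) (A × Fin k) ℂ),
    traceNorm X = 1 ∧ r = traceNorm (lext (B := Fin k) Φ X)}

/-- Choi–Jamiołkowski matrix of a map. -/
def choi [Fintype A] [DecidableEq A] (Φ : Matrix A A ℂ →ₗ[ℂ] Matrix O O ℂ) :
    Matrix (A × O) (A × O) ℂ :=
  of fun p q => Φ (single p.1 q.1 1) p.2 q.2

/-- The map associated to a Choi matrix. -/
def choiAction [Fintype A] (J : Matrix (A × O) (A × O) ℂ) :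
    Matrix A A ℂ →ₗ[ℂ] Matrix O O ℂ where
  toFun ρ := of fun o o' => ∑ i, ∑ j, ρ i j * J (i, o) (j, o')
  map_add' M N := by
    ext o o'
    simp [Matrix.add_apply, add_mul, Finset.sum_add_distrib]
  map_smul' c M := by
    ext o o'
    simp [Matrix.smul_apply, Finset.mul_sum, mul_assoc]

/-- Permutation unitary W_π on n tensor copies: W_π|f⟩ = |f ∘ π⁻¹⟩. -/
def permMat (n : ℕ) (A : Type*) [DecidableEq A] (π : Equiv.Perm (Fin n)) :
    Matrix (Fin n → A) (Fin n → A) ℂ :=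
  of fun g f => if g = f ∘ π.symm then 1 else 0

/-- Partial trace keeping only the j-th copy and the system B. -/
def reduceJ [Fintype A] [DecidableEq A] [Fintype B] {n : ℕ} (j : Fin n)
    (M : Matrix ((Fin n → A) × B) ((Fin n → A) × B) ℂ) : Matrix (A × B) (A × B) ℂ :=
  of fun p q => ∑ f : Fin n → A,
    if f j = p.1 then M (f, p.2) (Function.update f j q.1, q.2) else 0

/-- Partial trace keeping only the j-th copy (no side system). -/
def reduceJ0 [Fintype A] [DecidableEq A] {n : ℕ} (j : Fin n)
    (M : Matrix (Fin n → A) (Fin n → A) ℂ) : Matrix A A ℂ :=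
  of fun a a' => ∑ f : Fin n → A,
    if f j = a then M f (Function.update f j a') else 0

/-- Partial trace keeping the j-th copy on each side. -/
def reduceJJ [Fintype A] [DecidableEq A] [Fintype B] [DecidableEq B] {n : ℕ} (j : Fin n)
    (M : Matrix ((Fin n → A) × (Fin n → B)) ((Fin n → A) × (Fin n → B)) ℂ) :
    Matrix (A × B) (A × B) ℂ :=
  of fun p q => ∑ f : Fin n → A, ∑ g : Fin n → B,
    if f j = p.1 ∧ g j = p.2 then
      M (f, g) (Function.update f j q.1, Function.update g j q.2) else 0

/-- A symmetric broadcasting channel: covariant under all permutations of outputs. -/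
def IsSymmetricBC [Fintype A] [DecidableEq A] {n : ℕ}
    (Λ : Matrix A A ℂ →ₗ[ℂ] Matrix (Fin n → A) (Fin n → A) ℂ) : Prop :=
  ∀ (ρ : Matrix A A ℂ), IsDensity ρ → ∀ π : Equiv.Perm (Fin n),
    Λ ρ = permMat n A π * Λ ρ * (permMat n A π)ᴴ

/-- The optimal unilocal n-broadcasting fidelity of a bipartite state. -/
def fBroadcast [Fintype A] [DecidableEq A] [Fintype B] [DecidableEq B] (n : ℕ)
    (ρ : Matrix (A × B) (A × B) ℂ) : ℝ :=
  sSup {r | ∃ Λ : Matrix A A ℂ →ₗ[ℂ] Matrix (Fin n → A) (Fin n → A) ℂ, IsCPTP Λ ∧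
    r = (n : ℝ)⁻¹ * ∑ j : Fin n, fidelity ρ (reduceJ j (lext (B := B) Λ ρ))}

/-- Channel conjugated by the permutation unitary W_π. -/
def conjPerm [Fintype A] [DecidableEq A] {n : ℕ} (π : Equiv.Perm (Fin n))
    (Λ : Matrix A A ℂ →ₗ[ℂ] Matrix (Fin n → A) (Fin n → A) ℂ) :
    Matrix A A ℂ →ₗ[ℂ] Matrix (Fin n → A) (Fin n → A) ℂ where
  toFun ρ := permMat n A π * Λ ρ * (permMat n A π)ᴴ
  map_add' M N := by simp [map_add, Matrix.mul_add, Matrix.add_mul]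
  map_smul' c M := by simp [Matrix.mul_smul, Matrix.smul_mul]

/-- Symmetrization (1/n!) Σ_π W_π Λ(·) W_π†. -/
def symmetrize [Fintype A] [DecidableEq A] {n : ℕ}
    (Λ : Matrix A A ℂ →ₗ[ℂ] Matrix (Fin n → A) (Fin n → A) ℂ) :
    Matrix A A ℂ →ₗ[ℂ] Matrix (Fin n → A) (Fin n → A) ℂ :=
  ((n.factorial : ℂ))⁻¹ • ∑ π : Equiv.Perm (Fin n), conjPerm π Λ

/-- Partial transpose on the first (input) factor. -/
def ptransA (J : Matrix (A × O) (A × O) ℂ) : Matrix (A × O) (A × O) ℂ :=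
  of fun p q => J (q.1, p.2) (p.1, q.2)

/-- tr_A (X ρ_AB), contracting the A index: entry ((o,b),(o',b')) = Σ_{i,k} X(i,o)(k,o') ρ(k,b)(i,b'). -/
def traceContractA [Fintype A] (X : Matrix (A × O) (A × O) ℂ)
    (ρ : Matrix (A × B) (A × B) ℂ) : Matrix (O × B) (O × B) ℂ :=
  of fun p q => ∑ i, ∑ k, X (i, p.1) (k, q.1) * ρ (k, p.2) (i, q.2)

/-- A POVM. -/
def IsPOVM {I : Type*} [Fintype I] [Fintype A] [DecidableEq A]
    (M : I → Matrix A A ℂ) : Prop :=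
  (∀ i, (M i).PosSemidef) ∧ ∑ i, M i = 1

/-- Quantum-to-classical channel of a POVM: ρ ↦ Σᵢ tr(Mᵢρ)|i⟩⟨i|. -/
def qcChan {I : Type*} [Fintype I] [DecidableEq I] [Fintype A]
    (M : I → Matrix A A ℂ) : Matrix A A ℂ →ₗ[ℂ] Matrix I I ℂ where
  toFun ρ := of fun i j => if i = j then (M i * ρ).trace else 0
  map_add' X Y := by
    ext i j
    simp only [of_apply, Matrix.add_apply]
    split_ifs <;> simp [Matrix.mul_add]
  map_smul' c X := by
    ext i j
    simp only [of_apply, Matrix.smul_apply, RingHom.id_apply]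
    split_ifs <;> simp [Matrix.mul_smul]

/-- Classical broadcast of a POVM outcome into n copies: ρ ↦ Σᵢ tr(Mᵢρ)(|i⟩⟨i|)^{⊗n}. -/
def bcChan {I : Type*} [Fintype I] [DecidableEq I] [Fintype A] {n : ℕ} (hn : 0 < n)
    (M : I → Matrix A A ℂ) : Matrix A A ℂ →ₗ[ℂ] Matrix (Fin n → I) (Fin n → I) ℂ where
  toFun ρ := of fun f g =>
    if f = g ∧ (∀ k, f k = f ⟨0, hn⟩) then (M (f ⟨0, hn⟩) * ρ).trace else 0
  map_add' X Y := by
    ext f g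
    simp only [of_apply, Matrix.add_apply]
    split_ifs <;> simp [Matrix.mul_add]
  map_smul' c X := by
    ext f g
    simp only [of_apply, Matrix.smul_apply, RingHom.id_apply]
    split_ifs <;> simp [Matrix.mul_smul]

/-- The UQCM vectors |v_i⟩ = (1/√(2(d+1)))(2|i⟩|ii⟩ + Σ_{j≠i}|j⟩(|ij⟩+|ji⟩)). -/
def uqcmVec (d : ℕ) (i : Fin d) : Fin d × Fin d × Fin d → ℂ := fun p =>
  (((Real.sqrt (2 * (d + 1)) : ℝ) : ℂ))⁻¹ *
    ((if p.1 = i ∧ p.2.1 = i ∧ p.2.2 = i then 2 else 0) +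
     (if p.1 ≠ i ∧ p.2.1 = i ∧ p.2.2 = p.1 then 1 else 0) +
     (if p.1 ≠ i ∧ p.2.1 = p.1 ∧ p.2.2 = i then 1 else 0))

/-- Choi matrix of the universal quantum cloning machine, J = Σᵢ |vᵢ⟩⟨vᵢ|. -/
def uqcmChoi (d : ℕ) : Matrix (Fin d × Fin d × Fin d) (Fin d × Fin d × Fin d) ℂ :=
  ∑ i : Fin d, vecMulVec (uqcmVec d i) (star (uqcmVec d i))

/-! Tracing out the second output of the UQCM Choi matrix leaves `(1 + (d+2)|Φ⁺⟩⟨Φ⁺|)/(2d+2)`,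
the Choi matrix of the depolarizing channel `ρ ↦ ((d+2) ρ + tr ρ • 1)/(2d+2)`. That channel is
trace preserving, which gives `tr_{A₁A₂} J = 1`, and by the Choi–Jamiołkowski correspondence the
marginal of `Υ(ρ)` is the channel applied to `ρ`. -/

section ChoiCalculus

variable {O₂ : Type*}

def ptraceC [Fintype O₂] (J : Matrix (A × O × O₂) (A × O × O₂) ℂ) : Matrix (A × O) (A × O) ℂ :=
  of fun p q => ∑ c, J (p.1, p.2, c) (q.1, q.2, c)

theorem ptraceB_choiAction [Fintype A] [Fintype O₂] (J : Matrix (A × O × O₂) (A × O × O₂) ℂ)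
    (ρ : Matrix A A ℂ) : ptraceB (choiAction J ρ) = choiAction (ptraceC J) ρ := by
  ext a a'
  simp only [ptraceB, ptraceC, choiAction, LinearMap.coe_mk, AddHom.coe_mk, of_apply,
    Finset.mul_sum]
  rw [Finset.sum_comm]
  exact Finset.sum_congr rfl fun _ _ => Finset.sum_comm

theorem ptraceB_ptraceC [Fintype O] [Fintype O₂] (J : Matrix (A × O × O₂) (A × O × O₂) ℂ) :
    ptraceB (ptraceC J) = ptraceB J := by
  ext i j
  simp [ptraceB, ptraceC, Fintype.sum_prod_type]

variable [Fintype A] [DecidableEq A]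

theorem trace_single {α : Type*} [AddCommMonoid α] (i j : A) (c : α) : (single i j c).trace = if i = j then c else 0 := by
  split_ifs with h
  · rw [h, trace_single_eq_same]
  · exact trace_single_eq_of_ne i j c h

theorem choiAction_choi (Φ : Matrix A A ℂ →ₗ[ℂ] Matrix O O ℂ) : choiAction (choi Φ) = Φ := by
  ext ρ o o'
  conv_rhs => rw [matrix_eq_sum_single ρ]
  simp only [choiAction, choi, LinearMap.coe_mk, AddHom.coe_mk, of_apply, map_sum,
    Matrix.sum_apply]
  refine Finset.sum_congr rfl fun i _ => Finset.sum_congr rfl fun j _ => ?_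
  rw [← smul_eq_mul, ← Matrix.smul_apply, ← map_smul, smul_single, smul_eq_mul, mul_one]

theorem ptraceB_choi [Fintype O] (Φ : Matrix A A ℂ →ₗ[ℂ] Matrix O O ℂ)
    (hΦ : ∀ M, (Φ M).trace = M.trace) : ptraceB (choi Φ) = 1 := by
  ext i j
  rw [one_apply, ← trace_single]
  exact hΦ (single i j 1)

end ChoiCalculus

section Depolarizing

variable (n : Type*) [Fintype n] [DecidableEq n]

def depolarizing (p q : ℂ) : Matrix n n ℂ →ₗ[ℂ] Matrix n n ℂ :=
  p • LinearMap.id + q • (traceLinearMap n ℂ ℂ).smulRight 1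

variable {n}

theorem depolarizing_apply (p q : ℂ) (ρ : Matrix n n ℂ) :
    depolarizing n p q ρ = p • ρ + (q * ρ.trace) • 1 := by
  simp [depolarizing, mul_smul]

theorem trace_depolarizing (p q : ℂ) (ρ : Matrix n n ℂ) :
    (depolarizing n p q ρ).trace = (p + q * Fintype.card n) * ρ.trace := by
  simp [depolarizing_apply]
  ring

end Depolarizing

section UQCM

-- `√(2(d+1)) • uqcmVec d k = ∑ⱼ |j⟩(|kj⟩ + |jk⟩)`: the `2|k⟩|kk⟩` term is the summand `j = k`.
def uqcmWeight (d : ℕ) (k : Fin d) (p : Fin d × Fin d × Fin d) : ℂ :=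
  (if p.2.1 = k ∧ p.2.2 = p.1 then 1 else 0) + (if p.2.1 = p.1 ∧ p.2.2 = k then 1 else 0)

theorem uqcmVec_eq (d : ℕ) (k : Fin d) :
    uqcmVec d k = fun p => ((Real.sqrt (2 * (d + 1)) : ℝ) : ℂ)⁻¹ * uqcmWeight d k p := by
  funext ⟨x, y, z⟩
  simp only [uqcmVec, uqcmWeight]
  congr 1
  by_cases hx : x = k
  · subst hx
    split_ifs <;> simp_all
    norm_num
  · simp [hx]

theorem star_uqcmWeight (d : ℕ) (k : Fin d) (p : Fin d × Fin d × Fin d) :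
    star (uqcmWeight d k p) = uqcmWeight d k p := by
  unfold uqcmWeight
  split_ifs <;> norm_num

theorem uqcmChoi_apply (d : ℕ) (p q : Fin d × Fin d × Fin d) :
    uqcmChoi d p q = (2 * ((d : ℂ) + 1))⁻¹ * ∑ k, uqcmWeight d k p * uqcmWeight d k q := by
  have hnorm : ((Real.sqrt (2 * (d + 1)) : ℝ) : ℂ)⁻¹ * ((Real.sqrt (2 * (d + 1)) : ℝ) : ℂ)⁻¹
      = (2 * ((d : ℂ) + 1))⁻¹ := by
    rw [← mul_inv, ← Complex.ofReal_mul, Real.mul_self_sqrt (by positivity)]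
    push_cast
    ring
  simp only [uqcmChoi, Matrix.sum_apply, vecMulVec_apply, uqcmVec_eq, Pi.star_apply,
    star_mul', star_uqcmWeight, star_inv₀, Complex.star_def, Complex.conj_ofReal, Finset.mul_sum,
    ← hnorm]
  exact Finset.sum_congr rfl fun k _ => by ring

theorem sum_uqcmWeight_mul (d : ℕ) (i j a a' : Fin d) :
    ∑ b, ∑ k, uqcmWeight d k (i, a, b) * uqcmWeight d k (j, a', b)
      = (if i = j ∧ a = a' then 1 else 0) + ((d : ℂ) + 2) * (if i = a ∧ j = a' then 1 else 0) := by
  simp only [uqcmWeight, mul_add, Finset.sum_add_distrib, ite_and, mul_ite, mul_zero, mul_one,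
    eq_comm, Finset.sum_ite_eq, Finset.mem_univ, if_true, Finset.sum_ite_irrel,
    Finset.sum_const_zero, Finset.sum_const, Finset.card_univ, Fintype.card_fin, nsmul_eq_mul]
  split_ifs <;> simp_all <;> ring

theorem ptraceC_uqcmChoi (d : ℕ) :
    ptraceC (uqcmChoi d) =
      choi (depolarizing (Fin d) (((d : ℂ) + 2) / (2 * d + 2)) (1 / (2 * (d : ℂ) + 2))) := by
  ext ⟨i, a⟩ ⟨j, a'⟩
  simp only [ptraceC, of_apply, uqcmChoi_apply, ← Finset.mul_sum, sum_uqcmWeight_mul, choi,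
    depolarizing_apply, Matrix.smul_apply, smul_eq_mul, Matrix.add_apply, one_apply, single_apply,
    trace_single]
  rw [show 2 * (d : ℂ) + 2 = 2 * (d + 1) by ring]
  by_cases hij : i = j <;> by_cases haa : a = a' <;> simp only [hij, haa, and_true,
    and_false, if_true, if_false] <;> ring

end UQCM

theorem uqcm_marginal_general (d : ℕ) :
    (uqcmChoi d).PosSemidef ∧ ptraceB (uqcmChoi d) = 1 ∧
    ∀ ρ : Matrix (Fin d) (Fin d) ℂ, IsDensity ρ →
      ptraceB (choiAction (uqcmChoi d) ρ) =
        (((d : ℂ) + 2) / (2 * d + 2)) • ρ +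
          (1 / (2 * (d : ℂ) + 2)) • (1 : Matrix (Fin d) (Fin d) ℂ) := by
  have htp : ∀ M : Matrix (Fin d) (Fin d) ℂ,
      (depolarizing (Fin d) (((d : ℂ) + 2) / (2 * d + 2)) (1 / (2 * (d : ℂ) + 2)) M).trace
        = M.trace := by
    intro M
    have hne : 2 * (d : ℂ) + 2 ≠ 0 := by norm_cast
    rw [trace_depolarizing, Fintype.card_fin]
    field_simp
    ring
  refine ⟨posSemidef_sum _ fun i _ => posSemidef_vecMulVec_self_star _, ?_, fun ρ hρ => ?_⟩
  · rw [← ptraceB_ptraceC, ptraceC_uqcmChoi]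
    exact ptraceB_choi _ htp
  · rw [ptraceB_choiAction, ptraceC_uqcmChoi, choiAction_choi, depolarizing_apply, hρ.2, mul_one]

/-- The UQCM Choi matrix defines a valid channel whose single-copy marginal is depolarizing. -/
theorem uqcm_marginal (d : ℕ) (hd : 0 < d) :
    (uqcmChoi d).PosSemidef ∧ ptraceB (uqcmChoi d) = 1 ∧
    ∀ ρ : Matrix (Fin d) (Fin d) ℂ, IsDensity ρ →
      ptraceB (choiAction (uqcmChoi d) ρ) =
        (((d : ℂ) + 2) / (2 * d + 2)) • ρ +
          (1 / (2 * (d : ℂ) + 2)) • (1 : Matrix (Fin d) (Fin d) ℂ) :=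
  uqcm_marginal_general d

end QIT

end
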